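/- Let L_d : M₃(ℝ) × M₃(ℝ) → ℝ be Fréchet differentiable and left SO(3)-invariant, i.e. L_d(A g, A h) = L_d(g, h) for all A ∈ SO(3) and all g, h ∈ M₃(ℝ), and define the reduced discrete Lagrangian l_d(W) := L_d(I, W). Then for all g_{k-1}, g_k, g_{k+1} ∈ SO(3), setting W_{k-1} := g_{k-1}ᵀ g_k and W_k := g_kᵀ g_{k+1}, and for every skew-symmetric 3×3 matrix η, one has ⟨D₁L_d(g_k, g_{k+1}) + D₂L_d(g_{k-1}, g_k), g_k η⟩ = ⟨l'_d(W_{k-1}), W_{k-1} η⟩ − ⟨l'_d(W_k), η W_k⟩, where ⟨A, B⟩ = trace(Aᵀ B) and D₁L_d, D₂L_d, l'_d are the gradient matrices with respect to this inner product. Consequently, the left-hand sides of the unreduced discrete nonholonomic equations and of the discrete Euler–Poincaré–Suslov equations agree on all constrained variation directions δg_k = g_k η, so the two sets of dynamical equations are equivalent. -/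

import Mathlib

/-!
Left invariance under `A = g_k` and `A = g_{k-1}` moves both gradient pairings to the identity:
`⟨D₁L(g_k, g_{k+1}), g_k η⟩ = ⟨D₁L(1, W_k), η⟩` and `⟨D₂L(g_{k-1}, g_k), g_k η⟩ = ⟨l'(W_{k-1}), W_{k-1} η⟩`.
The remaining term is infinitesimal invariance: `L` is constant along the curve
`s ↦ (exp (s η), exp (s η) W)`, which stays in the `SO(n)`-orbit of `(1, W)` since the exponential
of a skew-symmetric matrix is special orthogonal; differentiating at `s = 0` gives
`⟨D₁L(1, W), η⟩ + ⟨D₂L(1, W), η W⟩ = 0`.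
-/

open Matrix

attribute [local instance] Matrix.frobeniusNormedAddCommGroup Matrix.frobeniusNormedSpace

theorem DifferentiableAt.fderiv_uncurry_apply_eq_add
    {E F : Type*} [NormedAddCommGroup E] [NormedSpace ℝ E] [NormedAddCommGroup F] [NormedSpace ℝ F]
    {f : E → F → ℝ} {x : E} {y : F} (hf : DifferentiableAt ℝ (fun p : E × F => f p.1 p.2) (x, y))
    {u : E} {v : F} {a b : ℝ} (ha : HasDerivAt (fun s : ℝ => f (x + s • u) y) a 0)
    (hb : HasDerivAt (fun s : ℝ => f x (y + s • v)) b 0) :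
    fderiv ℝ (fun p : E × F => f p.1 p.2) (x, y) (u, v) = a + b := by
  have hline (w : E × F) := hf.hasFDerivAt.hasLineDerivAt w
  have hu : fderiv ℝ (fun p : E × F => f p.1 p.2) (x, y) (u, 0) = a :=
    HasDerivAt.unique (hline (u, 0)) (by simpa using ha)
  have hv : fderiv ℝ (fun p : E × F => f p.1 p.2) (x, y) (0, v) = b :=
    HasDerivAt.unique (hline (0, v)) (by simpa using hb)
  rw [← hu, ← hv, ← map_add, Prod.mk_add_mk, add_zero, zero_add]

theorem fderiv_apply_eq_zero_of_const_along
    {E : Type*} [NormedAddCommGroup E] [NormedSpace ℝ E] {f : E → ℝ} {γ : ℝ → E} {v : E}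
    (hf : DifferentiableAt ℝ f (γ 0)) (hγ : HasDerivAt γ v 0) (hconst : ∀ s, f (γ s) = f (γ 0)) :
    fderiv ℝ f (γ 0) v = 0 :=
  (hf.hasFDerivAt.comp_hasDerivAt 0 hγ).unique <| by
    simpa only [Function.comp_def, hconst] using hasDerivAt_const (0 : ℝ) (f (γ 0))

section LeftInvariant

variable {n : Type*} [Fintype n] [DecidableEq n] {L : Matrix n n ℝ → Matrix n n ℝ → ℝ}
  {D : Matrix n n ℝ → Matrix n n ℝ → Matrix n n ℝ} {A : Matrix n n ℝ}

theorem trace_grad_fst_mul_left (hD : ∀ g h X : Matrix n n ℝ,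
      HasDerivAt (fun s : ℝ => L (g + s • X) h) ((D g h)ᵀ * X).trace 0)
    (hA : ∀ g h, L (A * g) (A * h) = L g h) (g h X : Matrix n n ℝ) :
    ((D (A * g) (A * h))ᵀ * (A * X)).trace = ((D g h)ᵀ * X).trace := by
  have hline : (fun s : ℝ => L (A * g + s • (A * X)) (A * h)) = fun s => L (g + s • X) h :=
    funext fun s => by rw [← Matrix.mul_smul, ← mul_add, hA]
  exact (hD (A * g) (A * h) (A * X)).unique (hline ▸ hD g h X)

theorem trace_grad_snd_mul_left (hD : ∀ g h X : Matrix n n ℝ,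
      HasDerivAt (fun s : ℝ => L g (h + s • X)) ((D g h)ᵀ * X).trace 0)
    (hA : ∀ g h, L (A * g) (A * h) = L g h) (g h X : Matrix n n ℝ) :
    ((D (A * g) (A * h))ᵀ * (A * X)).trace = ((D g h)ᵀ * X).trace := by
  have hline : (fun s : ℝ => L (A * g) (A * h + s • (A * X))) = fun s => L g (h + s • X) :=
    funext fun s => by rw [← Matrix.mul_smul, ← mul_add, hA]
  exact (hD (A * g) (A * h) (A * X)).unique (hline ▸ hD g h X)

end LeftInvariant

section SkewSymmetricExp

attribute [local instance] Matrix.frobeniusNormedRing Matrix.frobeniusNormedAlgebra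

variable {n : Type*} [Fintype n] [DecidableEq n] {η : Matrix n n ℝ}

theorem Matrix.transpose_exp_mul_exp_of_transpose_eq_neg (hη : ηᵀ = -η) :
    (NormedSpace.exp η)ᵀ * NormedSpace.exp η = 1 := by
  rw [← exp_transpose, hη, exp_neg]
  exact Matrix.nonsing_inv_mul _ ((isUnit_exp η).map detMonoidHom)

theorem Matrix.det_exp_of_transpose_eq_neg (hη : ηᵀ = -η) : (NormedSpace.exp η).det = 1 := by
  have hsq : (NormedSpace.exp η).det ^ 2 = 1 := by
    simpa [sq] using congrArg det (transpose_exp_mul_exp_of_transpose_eq_neg hη)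
  have hnonneg : 0 ≤ (NormedSpace.exp η).det := by
    have hhalf : η = (1 / 2 : ℝ) • η + (1 / 2 : ℝ) • η := by rw [← add_smul]; norm_num
    rw [hhalf, exp_add_of_commute _ _ (Commute.refl _), det_mul]
    exact mul_self_nonneg _
  nlinarith

theorem Matrix.hasDerivAt_exp_smul_zero (η : Matrix n n ℝ) :
    HasDerivAt (fun s : ℝ => NormedSpace.exp (s • η)) η 0 := by
  have h := hasDerivAt_exp_smul_const (𝕂 := ℝ) η 0
  rw [zero_smul, NormedSpace.exp_zero, one_mul] at h
  exact h

theorem trace_grad_fst_add_trace_grad_snd_eq_zero {L : Matrix n n ℝ → Matrix n n ℝ → ℝ}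
    {D₁ D₂ : Matrix n n ℝ → Matrix n n ℝ → Matrix n n ℝ} {W : Matrix n n ℝ}
    (hdiff : DifferentiableAt ℝ (fun p : Matrix n n ℝ × Matrix n n ℝ => L p.1 p.2) (1, W))
    (hD₁ : HasDerivAt (fun s : ℝ => L (1 + s • η) W) ((D₁ 1 W)ᵀ * η).trace 0)
    (hD₂ : HasDerivAt (fun s : ℝ => L 1 (W + s • (η * W))) ((D₂ 1 W)ᵀ * (η * W)).trace 0)
    (hInv : ∀ A g h : Matrix n n ℝ, Aᵀ * A = 1 → A.det = 1 → L (A * g) (A * h) = L g h)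
    (hη : ηᵀ = -η) :
    ((D₁ 1 W)ᵀ * η).trace + ((D₂ 1 W)ᵀ * (η * W)).trace = 0 := by
  set γ : ℝ → Matrix n n ℝ × Matrix n n ℝ := fun s =>
    (NormedSpace.exp (s • η), NormedSpace.exp (s • η) * W)
  have hγ : HasDerivAt γ (η, η * W) 0 :=
    (hasDerivAt_exp_smul_zero η).prodMk ((hasDerivAt_exp_smul_zero η).mul_const W)
  have hγ₀ : γ 0 = (1, W) := by simp [γ]
  have hconst (s : ℝ) : L (γ s).1 (γ s).2 = L (γ 0).1 (γ 0).2 := by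
    have hskew : (s • η)ᵀ = -(s • η) := by rw [transpose_smul, hη, smul_neg]
    rw [hγ₀, ← hInv _ 1 W (transpose_exp_mul_exp_of_transpose_eq_neg hskew)
      (det_exp_of_transpose_eq_neg hskew), mul_one]
  have hzero := fderiv_apply_eq_zero_of_const_along (hγ₀ ▸ hdiff) hγ hconst
  rwa [hγ₀, hdiff.fderiv_uncurry_apply_eq_add hD₁ hD₂] at hzero

end SkewSymmetricExp

theorem discrete_unreduced_reduced_equivalence_general
    (Ld : Matrix (Fin 3) (Fin 3) ℝ → Matrix (Fin 3) (Fin 3) ℝ → ℝ)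
    (hdiff : Differentiable ℝ (fun p : Matrix (Fin 3) (Fin 3) ℝ × Matrix (Fin 3) (Fin 3) ℝ => Ld p.1 p.2))
    (D1 D2 : Matrix (Fin 3) (Fin 3) ℝ → Matrix (Fin 3) (Fin 3) ℝ →
      Matrix (Fin 3) (Fin 3) ℝ)
    (hD1 : ∀ g h X : Matrix (Fin 3) (Fin 3) ℝ,
      HasDerivAt (fun s : ℝ => Ld (g + s • X) h) ((D1 g h)ᵀ * X).trace 0)
    (hD2 : ∀ g h X : Matrix (Fin 3) (Fin 3) ℝ,
      HasDerivAt (fun s : ℝ => Ld g (h + s • X)) ((D2 g h)ᵀ * X).trace 0)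
    (hInv : ∀ A g h : Matrix (Fin 3) (Fin 3) ℝ,
      Aᵀ * A = 1 → A.det = 1 → Ld (A * g) (A * h) = Ld g h)
    (g₀ g₁ g₂ : Matrix (Fin 3) (Fin 3) ℝ)
    (h₀ : g₀ᵀ * g₀ = 1) (hd₀ : g₀.det = 1)
    (h₁ : g₁ᵀ * g₁ = 1) (hd₁ : g₁.det = 1)
    (η : Matrix (Fin 3) (Fin 3) ℝ) (hη : ηᵀ = -η) :
    ((D1 g₁ g₂ + D2 g₀ g₁)ᵀ * (g₁ * η)).trace =
      ((D2 1 (g₀ᵀ * g₁))ᵀ * ((g₀ᵀ * g₁) * η)).trace -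
        ((D2 1 (g₁ᵀ * g₂))ᵀ * (η * (g₁ᵀ * g₂))).trace := by
  have hW₁ : g₁ * (g₁ᵀ * g₂) = g₂ := by rw [← mul_assoc, mul_eq_one_comm.mp h₁, one_mul]
  have hW₀ : g₀ * (g₀ᵀ * g₁) = g₁ := by rw [← mul_assoc, mul_eq_one_comm.mp h₀, one_mul]
  have hA := trace_grad_fst_mul_left hD1 (fun g h => hInv g₁ g h h₁ hd₁) 1 (g₁ᵀ * g₂) η
  have hB :=
    trace_grad_snd_mul_left hD2 (fun g h => hInv g₀ g h h₀ hd₀) 1 (g₀ᵀ * g₁) (g₀ᵀ * g₁ * η)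
  rw [mul_one, hW₁] at hA
  rw [mul_one, hW₀, ← mul_assoc g₀, hW₀] at hB
  have hC := trace_grad_fst_add_trace_grad_snd_eq_zero (hdiff (1, g₁ᵀ * g₂))
    (hD1 1 (g₁ᵀ * g₂) η) (hD2 1 (g₁ᵀ * g₂) (η * (g₁ᵀ * g₂))) hInv hη
  rw [transpose_add, add_mul, trace_add, hA, hB]
  linarith

/-- For a left `SO(3)`-invariant differentiable discrete Lagrangian
`L_d` with gradient matrices `D₁L_d, D₂L_d` (w.r.t. the Frobenius inner product
`⟨A,B⟩ = trace(AᵀB)`) and reduced discrete Lagrangian `l_d(W) = L_d(I,W)` (whose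
gradient is `l'_d(W) = D₂L_d(I,W)`), for `g_{k-1}, g_k, g_{k+1} ∈ SO(3)`,
`W_{k-1} = g_{k-1}ᵀ g_k`, `W_k = g_kᵀ g_{k+1}`, and any skew-symmetric `η`,
`⟨D₁L_d(g_k,g_{k+1}) + D₂L_d(g_{k-1},g_k), g_k η⟩
  = ⟨l'_d(W_{k-1}), W_{k-1} η⟩ − ⟨l'_d(W_k), η W_k⟩`:
the unreduced discrete nonholonomic equations and the discrete
Euler–Poincaré–Suslov equations agree on all constrained variation directions. -/
theorem discrete_unreduced_reduced_equivalence
    (Ld : Matrix (Fin 3) (Fin 3) ℝ → Matrix (Fin 3) (Fin 3) ℝ → ℝ)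
    (hdiff : Differentiable ℝ (fun p : Matrix (Fin 3) (Fin 3) ℝ × Matrix (Fin 3) (Fin 3) ℝ => Ld p.1 p.2))
    (D1 D2 : Matrix (Fin 3) (Fin 3) ℝ → Matrix (Fin 3) (Fin 3) ℝ →
      Matrix (Fin 3) (Fin 3) ℝ)
    (hD1 : ∀ g h X : Matrix (Fin 3) (Fin 3) ℝ,
      HasDerivAt (fun s : ℝ => Ld (g + s • X) h) ((D1 g h)ᵀ * X).trace 0)
    (hD2 : ∀ g h X : Matrix (Fin 3) (Fin 3) ℝ,
      HasDerivAt (fun s : ℝ => Ld g (h + s • X)) ((D2 g h)ᵀ * X).trace 0)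
    (hInv : ∀ A g h : Matrix (Fin 3) (Fin 3) ℝ,
      Aᵀ * A = 1 → A.det = 1 → Ld (A * g) (A * h) = Ld g h)
    (g₀ g₁ g₂ : Matrix (Fin 3) (Fin 3) ℝ)
    (h₀ : g₀ᵀ * g₀ = 1) (hd₀ : g₀.det = 1)
    (h₁ : g₁ᵀ * g₁ = 1) (hd₁ : g₁.det = 1)
    (h₂ : g₂ᵀ * g₂ = 1) (hd₂ : g₂.det = 1)
    (η : Matrix (Fin 3) (Fin 3) ℝ) (hη : ηᵀ = -η) :
    ((D1 g₁ g₂ + D2 g₀ g₁)ᵀ * (g₁ * η)).trace =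
      ((D2 1 (g₀ᵀ * g₁))ᵀ * ((g₀ᵀ * g₁) * η)).trace -
        ((D2 1 (g₁ᵀ * g₂))ᵀ * (η * (g₁ᵀ * g₂))).trace :=
  discrete_unreduced_reduced_equivalence_general Ld hdiff D1 D2 hD1 hD2 hInv g₀ g₁ g₂ h₀ hd₀ h₁ hd₁
    η hη
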